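/- For real ν > 0, the Fourier transform of f_ν(x) = (1+x²)^{-(ν+1/2)}/B(ν,1/2) is f̂_ν(t) = |t|^ν K_ν(|t|)/(2^{ν−1}Γ(ν)) for t ≠ 0, and f̂_ν(0) = 1. -/

import Mathlib

open MeasureTheory Complex

/-- The classical Beta function. -/
noncomputable def betaFn (a b : ℝ) : ℝ := Real.Gamma a * Real.Gamma b / Real.Gamma (a + b)

/-- The modified Bessel function of the second kind `K_ν(t)`, via its standard
integral representation for `t > 0`. -/
noncomputable def besselK (ν t : ℝ) : ℝ :=
  ∫ u in Set.Ioi (0:ℝ), Real.exp (-t * Real.cosh u) * Real.cosh (ν * u)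

/-!
Subordination: the density is a Gamma mixture of Gaussians,
`Γ(s) (1 + x²)^(-s) = ∫₀^∞ u^(s-1) e^(-(1+x²)u) du` with `s = ν + 1/2`. Exchanging the two
integrals and using the Fourier transform of the Gaussian `e^(-ux²)`, together with
`B(ν, 1/2) Γ(s) = Γ(ν) √π`, gives `f̂(t) = Γ(ν)⁻¹ ∫₀^∞ u^(ν-1) e^(-u - t²/(4u)) du`.
For `t ≠ 0` the substitution `u = (|t|/2) eʷ` turns `u + t²/(4u)` into `|t| cosh w`, so the
integral is `(|t|/2)^ν ∫_ℝ e^(νw - |t| cosh w) dw = 2 (|t|/2)^ν K_ν(|t|)`; for `t = 0` it is `Γ(ν)`.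
-/

open Set

theorem integrableOn_rpow_mul_exp_neg_mul_Ioi {a r : ℝ} (ha : 0 < a) (hr : 0 < r) :
    IntegrableOn (fun u : ℝ ↦ u ^ (a - 1) * Real.exp (-(r * u))) (Ioi 0) :=
  .of_integral_ne_zero (by rw [Real.integral_rpow_mul_exp_neg_mul_Ioi ha hr]; positivity)

theorem rpow_neg_eq_integral {s r : ℝ} (hs : 0 < s) (hr : 0 < r) :
    r ^ (-s) = (Real.Gamma s)⁻¹ * ∫ u in Ioi 0, u ^ (s - 1) * Real.exp (-(r * u)) := by
  rw [Real.integral_rpow_mul_exp_neg_mul_Ioi hs hr, one_div, Real.inv_rpow hr.le,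
    Real.rpow_neg hr.le, mul_comm, mul_inv_cancel_right₀ (Real.Gamma_pos_of_pos hs).ne']

theorem integrable_one_add_sq_rpow_neg {s : ℝ} (hs : 1 / 2 < s) :
    Integrable (fun x : ℝ ↦ (1 + x ^ 2) ^ (-s)) := by
  have := integrable_rpow_neg_one_add_norm_sq (E := ℝ) (μ := volume) (r := 2 * s)
    (by simp; linarith)
  simpa [sq_abs, neg_div, mul_div_cancel_left₀ s two_ne_zero] using this

theorem integral_eq_integral_Ioi_add_comp_neg {E : Type*} [NormedAddCommGroup E]
    [NormedSpace ℝ E] {f : ℝ → E} (hf : Integrable f) :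
    ∫ x, f x = ∫ x in Ioi 0, (f x + f (-x)) := by
  rw [integral_add hf.integrableOn hf.comp_neg.integrableOn, integral_comp_neg_Ioi, neg_zero,
    add_comm, intervalIntegral.integral_Iic_add_Ioi hf.integrableOn hf.integrableOn]

theorem image_univ_mul_exp {a : ℝ} (ha : 0 < a) : (fun w ↦ a * Real.exp w) '' univ = Ioi 0 := by
  rw [image_univ, ← mul_zero a, ← image_mul_left_Ioi ha, ← Real.range_exp, ← range_comp]
  rfl

section
variable {E : Type*} [NormedAddCommGroup E] [NormedSpace ℝ E] {a : ℝ}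

theorem integral_comp_mul_exp (ha : 0 < a) (g : ℝ → E) :
    ∫ w, (a * Real.exp w) • g (a * Real.exp w) = ∫ u in Ioi 0, g u := by
  rw [← image_univ_mul_exp ha, integral_image_eq_integral_abs_deriv_smul MeasurableSet.univ
    (fun w _ ↦ ((Real.hasDerivAt_exp w).const_mul a).hasDerivWithinAt)
    (fun v _ w _ h ↦ Real.exp_injective (mul_left_cancel₀ ha.ne' h)), setIntegral_univ]
  simp_rw [abs_of_pos (mul_pos ha (Real.exp_pos _))]

theorem integrable_comp_mul_exp_iff (ha : 0 < a) (g : ℝ → E) :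
    Integrable (fun w ↦ (a * Real.exp w) • g (a * Real.exp w)) ↔ IntegrableOn g (Ioi 0) := by
  rw [← image_univ_mul_exp ha, integrableOn_image_iff_integrableOn_abs_deriv_smul
    MeasurableSet.univ (fun w _ ↦ ((Real.hasDerivAt_exp w).const_mul a).hasDerivWithinAt)
    (fun v _ w _ h ↦ Real.exp_injective (mul_left_cancel₀ ha.ne' h)), integrableOn_univ]
  simp_rw [abs_of_pos (mul_pos ha (Real.exp_pos _))]

end

theorem integral_exp_neg_mul_cosh_mul_exp_mul {ν c : ℝ}
    (h : Integrable fun w ↦ Real.exp (-c * Real.cosh w) * Real.exp (ν * w)) :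
    ∫ w, Real.exp (-c * Real.cosh w) * Real.exp (ν * w) = 2 * besselK ν c := by
  rw [integral_eq_integral_Ioi_add_comp_neg h, besselK, ← integral_const_mul]
  refine setIntegral_congr_fun measurableSet_Ioi fun w _ ↦ ?_
  rw [Real.cosh_neg, Real.cosh_eq (ν * w), mul_neg, Real.exp_neg (ν * w)]
  ring

theorem integrableOn_rpow_mul_exp_neg_add_div {ν : ℝ} (hν : 0 < ν) (c : ℝ) :
    IntegrableOn (fun u : ℝ ↦ u ^ (ν - 1) * Real.exp (-(u + c ^ 2 / (4 * u)))) (Ioi 0) := by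
  refine (Real.GammaIntegral_convergent hν).mono' ?_ ?_
  · refine ContinuousOn.aestronglyMeasurable ?_ measurableSet_Ioi
    exact (ContinuousOn.rpow_const continuousOn_id fun u hu ↦ Or.inl (ne_of_gt hu)).mul
      (by fun_prop (disch := exact fun u (hu : 0 < u) ↦ by positivity))
  · filter_upwards [ae_restrict_mem measurableSet_Ioi] with u (hu : 0 < u)
    rw [Real.norm_of_nonneg (by positivity), mul_comm]
    gcongr
    linarith [show 0 ≤ c ^ 2 / (4 * u) by positivity]

theorem integral_rpow_mul_exp_neg_add_div_eq_besselK {ν c : ℝ} (hν : 0 < ν) (hc : 0 < c) :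
    ∫ u in Ioi 0, u ^ (ν - 1) * Real.exp (-(u + c ^ 2 / (4 * u))) =
      2 * (c / 2) ^ ν * besselK ν c := by
  have ha : 0 < c / 2 := by positivity
  have hsubst : ∀ w, (c / 2 * Real.exp w) • ((c / 2 * Real.exp w) ^ (ν - 1) *
      Real.exp (-(c / 2 * Real.exp w + c ^ 2 / (4 * (c / 2 * Real.exp w))))) =
      (c / 2) ^ ν * (Real.exp (-c * Real.cosh w) * Real.exp (ν * w)) := by
    intro w
    have hx : 0 < c / 2 * Real.exp w := mul_pos ha (Real.exp_pos w)
    have hcosh : c / 2 * Real.exp w + c ^ 2 / (4 * (c / 2 * Real.exp w)) = c * Real.cosh w := by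
      rw [Real.cosh_eq, Real.exp_neg]
      field_simp
      ring
    rw [smul_eq_mul, hcosh, Real.rpow_sub_one hx.ne', Real.mul_rpow ha.le (Real.exp_pos w).le,
      ← Real.exp_mul, mul_comm w, neg_mul]
    field_simp
  have hk : Integrable fun w ↦ Real.exp (-c * Real.cosh w) * Real.exp (ν * w) := by
    have := ((integrable_comp_mul_exp_iff ha _).2 (integrableOn_rpow_mul_exp_neg_add_div hν c))
    simp_rw [hsubst] at this
    exact (this.const_mul ((c / 2) ^ ν)⁻¹).congr (.of_forall fun w ↦
      inv_mul_cancel_left₀ (Real.rpow_pos_of_pos ha ν).ne' _)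
  rw [← integral_comp_mul_exp ha]
  simp_rw [hsubst]
  rw [integral_const_mul, integral_exp_neg_mul_cosh_mul_exp_mul hk]
  ring

theorem fourierIntegral_gaussian_of_pos {b : ℝ} (hb : 0 < b) (t : ℝ) :
    ∫ x : ℝ, cexp (-(I * t * x)) * cexp (-(b * x ^ 2)) =
      ((√(Real.pi / b) * Real.exp (-(t ^ 2 / (4 * b))) : ℝ) : ℂ) := by
  have := fourierIntegral_gaussian (b := b) (by simpa using hb) (-t)
  simp_rw [mul_neg, neg_mul, neg_sq] at this
  rw [this, Real.sqrt_eq_rpow, ofReal_mul, ofReal_cpow (by positivity), ofReal_exp]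
  push_cast
  ring_nf

noncomputable def subordinationKernel (s t x u : ℝ) : ℂ :=
  cexp (-(I * t * x)) * ((u ^ (s - 1) * Real.exp (-((1 + x ^ 2) * u)) : ℝ) : ℂ)

theorem cexp_mul_one_add_sq_rpow_neg_eq_integral {s : ℝ} (hs : 0 < s) (t x : ℝ) :
    cexp (-(I * t * x)) * (((1 + x ^ 2) ^ (-s) : ℝ) : ℂ) =
      (Real.Gamma s : ℂ)⁻¹ * ∫ u in Ioi 0, subordinationKernel s t x u := by
  simp_rw [subordinationKernel, integral_const_mul, integral_complex_ofReal,
    rpow_neg_eq_integral hs (by positivity : 0 < 1 + x ^ 2)]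
  push_cast
  ring

theorem norm_subordinationKernel (s t x u : ℝ) :
    ‖subordinationKernel s t x u‖ = |u ^ (s - 1) * Real.exp (-((1 + x ^ 2) * u))| := by
  rw [subordinationKernel, norm_mul, norm_exp, norm_real, Real.norm_eq_abs]
  simp

theorem integrable_subordinationKernel {s : ℝ} (hs : 1 / 2 < s) (t : ℝ) :
    Integrable (Function.uncurry (subordinationKernel s t))
      ((volume : Measure ℝ).prod (volume.restrict (Ioi 0))) := by
  have hs0 : 0 < s := by linarith
  have hmeas : AEStronglyMeasurable (Function.uncurry (subordinationKernel s t))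
      ((volume : Measure ℝ).prod (volume.restrict (Ioi 0))) :=
    (by unfold subordinationKernel; fun_prop : Measurable _).aestronglyMeasurable
  refine (integrable_prod_iff hmeas).2 ⟨.of_forall fun x ↦ ?_, ?_⟩
  · exact (integrableOn_rpow_mul_exp_neg_mul_Ioi (r := 1 + x ^ 2) hs0 (by positivity)).ofReal
      |>.const_mul (cexp (-(I * t * x)))
  · refine ((integrable_one_add_sq_rpow_neg hs).const_mul (Real.Gamma s)).congr
      (.of_forall fun x ↦ ?_)
    simp only [Function.uncurry_apply_pair, norm_subordinationKernel]
    rw [rpow_neg_eq_integral hs0 (by positivity),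
      mul_inv_cancel_left₀ (Real.Gamma_pos_of_pos hs0).ne']
    refine setIntegral_congr_fun measurableSet_Ioi fun u (hu : 0 < u) ↦ ?_
    rw [abs_of_nonneg (by positivity)]

theorem integral_subordinationKernel {u : ℝ} (hu : 0 < u) (s t : ℝ) :
    ∫ x, subordinationKernel s t x u =
      ((√Real.pi * (u ^ (s - 1 / 2 - 1) * Real.exp (-(u + t ^ 2 / (4 * u)))) : ℝ) : ℂ) := by
  have hsplit : ∀ x : ℝ, subordinationKernel s t x u =
      ((u ^ (s - 1) * Real.exp (-u) : ℝ) : ℂ) * (cexp (-(I * t * x)) * cexp (-(u * x ^ 2))) := by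
    intro x
    rw [subordinationKernel, show -((1 + x ^ 2) * u) = -u + -(u * x ^ 2) by ring,
      Real.exp_add]
    push_cast
    ring
  simp_rw [hsplit]
  rw [integral_const_mul, fourierIntegral_gaussian_of_pos hu, ← ofReal_mul]
  congr 1
  rw [Real.sqrt_div' _ hu.le, Real.sqrt_eq_rpow u, Real.rpow_sub hu, Real.rpow_sub hu,
    Real.rpow_sub hu, Real.rpow_one, neg_add, Real.exp_add]
  field_simp

theorem integral_cexp_mul_one_add_sq_rpow_neg {s : ℝ} (hs : 1 / 2 < s) (t : ℝ) :
    ∫ x : ℝ, cexp (-(I * t * x)) * (((1 + x ^ 2) ^ (-s) : ℝ) : ℂ) =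
      ((√Real.pi / Real.Gamma s *
        ∫ u in Ioi 0, u ^ (s - 1 / 2 - 1) * Real.exp (-(u + t ^ 2 / (4 * u))) : ℝ) : ℂ) := by
  have hs0 : 0 < s := by linarith
  calc _ = ∫ x, (Real.Gamma s : ℂ)⁻¹ * ∫ u in Ioi 0, subordinationKernel s t x u := by
        simp_rw [cexp_mul_one_add_sq_rpow_neg_eq_integral hs0]
    _ = (Real.Gamma s : ℂ)⁻¹ * ∫ u in Ioi 0, ∫ x, subordinationKernel s t x u := by
        rw [integral_const_mul, integral_integral_swap (integrable_subordinationKernel hs t)]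
    _ = (Real.Gamma s : ℂ)⁻¹ * ∫ u in Ioi 0,
          ((√Real.pi * (u ^ (s - 1 / 2 - 1) * Real.exp (-(u + t ^ 2 / (4 * u)))) : ℝ) : ℂ) := by
        rw [setIntegral_congr_fun measurableSet_Ioi
          fun u hu ↦ integral_subordinationKernel hu s t]
    _ = _ := by
        rw [integral_complex_ofReal, integral_const_mul]
        push_cast
        ring

theorem student_density_fourier (ν : ℝ) (hν : 0 < ν) :
    (∀ t : ℝ, t ≠ 0 →
      (∫ x : ℝ, Complex.exp (-(Complex.I * t * x)) *
          (((1 + x ^ 2) ^ (-(ν + 1/2)) / betaFn ν (1/2) : ℝ) : ℂ)) =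
        ((|t| ^ ν * besselK ν |t| / (2 ^ (ν - 1) * Real.Gamma ν) : ℝ) : ℂ)) ∧
    (∫ x : ℝ, (((1 + x ^ 2) ^ (-(ν + 1/2)) / betaFn ν (1/2) : ℝ) : ℂ)) = 1 := by
  have hB : betaFn ν (1 / 2) = Real.Gamma ν * √Real.pi / Real.Gamma (ν + 1 / 2) := by
    rw [betaFn, Real.Gamma_one_half_eq]
  have hFT : ∀ t : ℝ, ∫ x : ℝ, cexp (-(I * t * x)) *
      (((1 + x ^ 2) ^ (-(ν + 1 / 2)) / betaFn ν (1 / 2) : ℝ) : ℂ) =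
      (((∫ u in Ioi 0, u ^ (ν - 1) * Real.exp (-(u + t ^ 2 / (4 * u)))) / Real.Gamma ν : ℝ)
        : ℂ) := by
    intro t
    simp_rw [ofReal_div, mul_div_assoc', integral_div,
      integral_cexp_mul_one_add_sq_rpow_neg (by linarith : 1 / 2 < ν + 1 / 2),
      add_sub_cancel_right, ← ofReal_div, hB]
    generalize ∫ u in Ioi 0, u ^ (ν - 1) * Real.exp (-(u + t ^ 2 / (4 * u))) = J
    have hΓs := Real.Gamma_pos_of_pos (by linarith : 0 < ν + 1 / 2)
    have hΓν := Real.Gamma_pos_of_pos hν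
    field_simp
  refine ⟨fun t ht ↦ ?_, ?_⟩
  · rw [hFT, ← sq_abs, integral_rpow_mul_exp_neg_add_div_eq_besselK hν (abs_pos.2 ht),
      Real.div_rpow (abs_nonneg t) zero_le_two, Real.rpow_sub_one two_ne_zero]
    congr 1
    field_simp
  · have hΓ : ∫ u in Ioi 0, u ^ (ν - 1) * Real.exp (-u) = Real.Gamma ν := by
      simpa using Real.integral_rpow_mul_exp_neg_mul_Ioi hν one_pos
    simpa [hΓ, (Real.Gamma_pos_of_pos hν).ne'] using hFT 0
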